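/- arXiv:2506.22010 — 5 statements merged into one kernel-verified Lean document; each statement's English description precedes it below -/
import Mathlib

section
/- Let M be a matroid with finite ground set, let r = rank(M) ≥ 1, and let k ≥ 0 be an integer. If B is a k-fault-tolerant basis of M (i.e., B is k-fault-tolerant spanning and has minimum cardinality among all k-fault-tolerant spanning sets of M), then r + k ≤ |B| ≤ (k+1)·r. -/
open Set

/-- The rank of a set `X` in a matroid `M`: the maximum cardinality of an
independent subset of `X`. -/
noncomputable def mrank {α : Type*} (M : Matroid α) (X : Set α) : ℕ :=
  sSup {n : ℕ | ∃ I, M.Indep I ∧ I ⊆ X ∧ I.ncard = n}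

/-- `B` is a `k`-fault-tolerant spanning set of `M`: `B ⊆ M.E` and removing any
at most `k` elements from `B` leaves a set of full rank. -/
def FTSpanning {α : Type*} (M : Matroid α) (k : ℕ) (B : Set α) : Prop :=
  B ⊆ M.E ∧ ∀ F ⊆ B, F.ncard ≤ k → mrank M (B \ F) = mrank M M.E

/-- `B` is a `k`-fault-tolerant basis of `M`: a `k`-fault-tolerant spanning set of
minimum cardinality among all `k`-fault-tolerant spanning sets. -/
def FTBasis {α : Type*} (M : Matroid α) (k : ℕ) (B : Set α) : Prop :=
  FTSpanning M k B ∧ ∀ B', FTSpanning M k B' → B.ncard ≤ B'.ncard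

/-- `X` is `h`-uniform in `M`: `rank(X) = h` and every subset of `X` of size `h`
has rank `h`. -/
def HUniform {α : Type*} (M : Matroid α) (h : ℕ) (X : Set α) : Prop :=
  mrank M X = h ∧ ∀ Y ⊆ X, Y.ncard = h → mrank M Y = h

/-! The lower bound holds for every `k`-fault-tolerant spanning set: deleting `k` of its elements
leaves a spanning set, which has at least `r` elements. For the upper bound, `B ⊆ E` is
`k`-fault-tolerant spanning iff every non-spanning flat misses more than `k` elements of `B`.
Since `B` has this property, so does `E`. Adjoining `k + 1` bases one after another, each chosen so
that its part outside the current set spans the rest of `E`, produces a set of size at most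
`(k + 1) r` with at least `min (k + 1) |E \ F|` elements outside each flat `F`; it is therefore
`k`-fault-tolerant spanning, and minimality of `B` bounds `|B|`. -/

namespace Matroid

variable {α : Type*} {M : Matroid α} {B X : Set α}

section RankFinite

variable [M.RankFinite]

lemma mrank_eq_toNat_eRk (X : Set α) : mrank M X = (M.eRk X).toNat := by
  obtain ⟨I, hI⟩ := M.exists_isBasis' X
  refine IsGreatest.csSup_eq ⟨⟨I, hI.indep, hI.subset, by rw [ncard_def, hI.eRk_eq_encard]⟩, ?_⟩
  rintro _ ⟨J, hJ, hJX, rfl⟩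
  exact ENat.toNat_le_toNat (hJ.encard_le_eRk_of_subset hJX) (M.isRkFinite_set X).eRk_lt_top.ne

lemma mrank_mono : Monotone (mrank M) := fun X Y hXY => by
  simp only [mrank_eq_toNat_eRk]
  exact ENat.toNat_le_toNat (M.eRk_mono hXY) (M.isRkFinite_set Y).eRk_lt_top.ne

lemma mrank_le_mrank_ground (X : Set α) : mrank M X ≤ mrank M M.E := by
  rw [mrank_eq_toNat_eRk, mrank_eq_toNat_eRk]
  exact ENat.toNat_le_toNat (M.eRk_ground ▸ M.eRk_le_eRank X) (M.isRkFinite_set M.E).eRk_lt_top.ne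

lemma mrank_closure (X : Set α) : mrank M (M.closure X) = mrank M X := by
  simp only [mrank_eq_toNat_eRk, eRk_closure_eq]

lemma mrank_le_ncard (hX : X.Finite) : mrank M X ≤ X.ncard := by
  rw [mrank_eq_toNat_eRk, ncard_def]
  exact ENat.toNat_le_toNat (M.eRk_le_encard X) hX.encard_lt_top.ne

lemma IsBase.ncard_eq_mrank_ground (hB : M.IsBase B) : B.ncard = mrank M M.E := by
  rw [mrank_eq_toNat_eRk, ncard_def, eRk_ground, hB.encard_eq_eRank]

end RankFinite

lemma exists_isBase_diff_subset_closure_diff (M : Matroid α) (S : Set α) :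
    ∃ B, M.IsBase B ∧ M.E \ S ⊆ M.closure (B \ S) := by
  obtain ⟨J, hJ⟩ := M.exists_isBasis (M.E \ S)
  obtain ⟨B, hB, hJB⟩ := hJ.indep.exists_isBase_superset
  refine ⟨B, hB, hJ.subset_closure.trans (M.closure_subset_closure ?_)⟩
  exact subset_sdiff.2 ⟨hJB, (subset_sdiff.1 hJ.subset).2⟩

section Finite

variable [M.Finite]

/- Step `S ↦ S ∪ B` with `B \ S` spanning `E \ S`: a flat `cl X` either contains `B \ S`, hence all
of `E \ S`, so `S` already meets `E \ cl X` entirely, or it misses a new element of `B \ S`. -/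
lemma exists_ncard_le_forall_min_le_ncard_diff_closure (i : ℕ) :
    ∃ S ⊆ M.E, S.ncard ≤ i * mrank M M.E ∧
      ∀ X, min i (M.E \ M.closure X).ncard ≤ (S \ M.closure X).ncard := by
  induction i with
  | zero => exact ⟨∅, empty_subset _, by simp, fun _ => by simp⟩
  | succ i ih =>
    obtain ⟨S, hSE, hScard, hS⟩ := ih
    obtain ⟨B, hB, hBS⟩ := M.exists_isBase_diff_subset_closure_diff S
    have hSB : S ∪ B ⊆ M.E := union_subset hSE hB.subset_ground
    refine ⟨S ∪ B, hSB, ?_, fun X => ?_⟩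
    · calc (S ∪ B).ncard ≤ S.ncard + B.ncard := ncard_union_le S B
        _ ≤ (i + 1) * mrank M M.E := by rw [hB.ncard_eq_mrank_ground, add_mul, one_mul]; omega
    have hfin : ((S ∪ B) \ M.closure X).Finite := (M.set_finite _ hSB).sdiff
    by_cases hcov : B \ S ⊆ M.closure X
    · have hsub : M.E \ M.closure X ⊆ (S ∪ B) \ M.closure X := fun x ⟨hxE, hxX⟩ => by
        by_cases hxS : x ∈ S
        · exact ⟨Or.inl hxS, hxX⟩
        · exact absurd (M.closure_subset_closure_of_subset_closure hcov (hBS ⟨hxE, hxS⟩)) hxX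
      exact (min_le_right _ _).trans (ncard_le_ncard hsub hfin)
    obtain ⟨x, ⟨hxB, hxS⟩, hxX⟩ := not_subset.1 hcov
    have hins : insert x (S \ M.closure X) ⊆ (S ∪ B) \ M.closure X :=
      insert_subset ⟨Or.inr hxB, hxX⟩ (sdiff_subset_sdiff_left subset_union_left)
    have hnew := ncard_le_ncard hins hfin
    rw [ncard_insert_of_notMem (fun h => hxS h.1) ((M.set_finite S hSE).sdiff)] at hnew
    have := hS X
    omega

end Finite

end Matroid

section FaultTolerant

open Matroid

variable {α : Type*} {M : Matroid α} [M.Finite] {k : ℕ} {B S : Set α}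

lemma ftSpanning_iff_lt_ncard_diff_closure (hB : B ⊆ M.E) :
    FTSpanning M k B ↔ ∀ X, mrank M X < mrank M M.E → k < (B \ M.closure X).ncard := by
  refine ⟨fun ⟨_, hspan⟩ X hX => ?_, fun h => ⟨hB, fun F hFB hFk => ?_⟩⟩
  · by_contra! hk
    have hrank := hspan (B \ M.closure X) sdiff_subset hk
    have hle : mrank M (B \ (B \ M.closure X)) ≤ mrank M (M.closure X) :=
      mrank_mono (by rw [sdiff_sdiff_right_self]; exact inter_subset_right)
    rw [hrank, mrank_closure] at hle
    omega
  · refine (mrank_le_mrank_ground _).antisymm (not_lt.1 fun hlt => ?_)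
    have hsub : B \ M.closure (B \ F) ⊆ F := fun x hx => by
      by_contra hxF
      exact hx.2 (M.subset_closure (B \ F) (sdiff_subset.trans hB) ⟨hx.1, hxF⟩)
    have := ncard_le_ncard hsub (M.set_finite F (hFB.trans hB))
    have := h _ hlt
    omega

lemma FTSpanning.superset (hB : FTSpanning M k B) (hBS : B ⊆ S) (hS : S ⊆ M.E) :
    FTSpanning M k S := by
  rw [ftSpanning_iff_lt_ncard_diff_closure hS]
  intro X hX
  exact ((ftSpanning_iff_lt_ncard_diff_closure hB.1).1 hB X hX).trans_le
    (ncard_le_ncard (sdiff_subset_sdiff_left hBS) ((M.set_finite S hS).sdiff))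

lemma FTSpanning.mrank_ground_add_le_ncard (hB : FTSpanning M k B) (hr : 0 < mrank M M.E) :
    mrank M M.E + k ≤ B.ncard := by
  have hBfin := M.set_finite B hB.1
  obtain ⟨F, hFB, hF⟩ := exists_subset_card_eq (min_le_right k B.ncard)
  have hrank := mrank_le_ncard (M := M) (hBfin.sdiff (t := F))
  rw [hB.2 F hFB (hF ▸ min_le_left _ _), ncard_sdiff hFB (hBfin.subset hFB), hF] at hrank
  omega

lemma exists_ftSpanning_ncard_le (hE : FTSpanning M k M.E) :
    ∃ S, FTSpanning M k S ∧ S.ncard ≤ (k + 1) * mrank M M.E := by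
  obtain ⟨S, hSE, hScard, hS⟩ := M.exists_ncard_le_forall_min_le_ncard_diff_closure (k + 1)
  refine ⟨S, (ftSpanning_iff_lt_ncard_diff_closure hSE).2 fun X hX => ?_, hScard⟩
  have := (ftSpanning_iff_lt_ncard_diff_closure subset_rfl).1 hE X hX
  have := hS X
  omega

lemma FTBasis.ncard_le (hB : FTBasis M k B) : B.ncard ≤ (k + 1) * mrank M M.E := by
  obtain ⟨S, hS, hScard⟩ := exists_ftSpanning_ncard_le (hB.1.superset hB.1.1 subset_rfl)
  exact (hB.2 S hS).trans hScard

end FaultTolerant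

/-- If `B` is a `k`-fault-tolerant basis of a matroid `M` with finite
ground set and rank `r ≥ 1`, then `r + k ≤ |B| ≤ (k+1)·r`. -/
theorem statement0 {α : Type*} (M : Matroid α) (hE : M.E.Finite)
    (r : ℕ) (hr : r = mrank M M.E) (hr1 : 1 ≤ r) (k : ℕ)
    (B : Set α) (hB : FTBasis M k B) :
    r + k ≤ B.ncard ∧ B.ncard ≤ (k + 1) * r := by
  have : M.Finite := ⟨hE⟩
  subst hr
  exact ⟨hB.1.mrank_ground_add_le_ncard hr1, hB.ncard_le⟩
end

section
/- Let M be a matroid with finite ground set E, rank(M) = r ≥ 1, and let k ≥ 0 be an integer. Let B ⊆ E be a k-fault-tolerant spanning set. Suppose X_0, X_1, …, X_k ⊆ B are pairwise disjoint sets such that X_0 is an inclusion-maximal independent subset of B and, for each i ∈ {1,…,k}, X_i is an inclusion-maximal independent subset of B \ (X_0 ∪ ⋯ ∪ X_{i-1}). Then B' = X_0 ∪ X_1 ∪ ⋯ ∪ X_k is also a k-fault-tolerant spanning set of M. -/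
open Set

/-- `I` is an inclusion-maximal independent subset of `S` in `M`. -/
def MaxIndepIn {α : Type*} (M : Matroid α) (S : Set α) (I : Set α) : Prop :=
  M.Indep I ∧ I ⊆ S ∧ ∀ J, M.Indep J → J ⊆ S → I ⊆ J → J = I


/-!
Fix `F ⊆ X 0 ∪ ⋯ ∪ X k` with `|F| ≤ k`. By pigeonhole some `X i` misses `F`. Every element of
`B` either lies in an earlier layer `X j` (`j < i`), or in `B \ ⋃ j < i, X j`, which is spanned by
its basis `X i`; hence `B \ F` lies in the closure of `(⋃ j, X j) \ F`, and the latter inherits the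
full rank of `B \ F`.
-/

namespace Matroid

variable {α : Type*} {M : Matroid α}

lemma cast_mrank_eq_eRk [M.RankFinite] (X : Set α) : (mrank M X : ℕ∞) = M.eRk X := by
  obtain ⟨I, hI⟩ := M.exists_isBasis' X
  have hIfin : I.Finite := hI.indep.finite
  suffices mrank M X = I.ncard by rw [this, hIfin.cast_ncard_eq, hI.encard_eq_eRk]
  refine IsGreatest.csSup_eq ⟨⟨I, hI.indep, hI.subset, rfl⟩, ?_⟩
  rintro n ⟨J, hJ, hJX, rfl⟩
  have hJI : J.encard ≤ I.encard := hI.encard_eq_eRk ▸ hJ.encard_le_eRk_of_subset hJX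
  rwa [← hJ.finite.cast_ncard_eq, ← hIfin.cast_ncard_eq, Nat.cast_le] at hJI

lemma maxIndepIn_iff_isBasis' {S I : Set α} : MaxIndepIn M S I ↔ M.IsBasis' I S :=
  ⟨fun ⟨hI, hIS, hmax⟩ => ⟨⟨hI, hIS⟩, fun J ⟨hJ, hJS⟩ hIJ => (hmax J hJ hJS hIJ).le⟩,
    fun hI => ⟨hI.indep, hI.subset, fun _ hJ hJS hIJ => (hI.2 ⟨hJ, hJS⟩ hIJ).antisymm hIJ⟩⟩

lemma sdiff_subset_closure_sdiff_of_isBasis' {B U I B' F : Set α} (hI : M.IsBasis' I (B \ U))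
    (hB : B ⊆ M.E) (hUB' : U ⊆ B') (hIB' : I ⊆ B') (hIF : Disjoint I F) :
    B \ F ⊆ M.closure (B' \ F) := by
  rintro e ⟨heB, heF⟩
  by_cases heU : e ∈ U
  · exact M.mem_closure_of_mem' ⟨hUB' heU, heF⟩ (hB heB)
  · have hspan : B \ U ⊆ M.closure I :=
      hI.closure_eq_closure ▸ M.subset_closure (B \ U) (sdiff_subset.trans hB)
    exact M.closure_subset_closure (subset_sdiff.2 ⟨hIB', hIF⟩) (hspan ⟨heB, heU⟩)

end Matroid

lemma exists_disjoint_of_ncard_lt {α ι : Type*} [Finite ι] {X : ι → Set α}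
    (hX : Pairwise (Function.onFun Disjoint X)) {F : Set α} (hF : F.Finite)
    (hcard : F.ncard < Nat.card ι) : ∃ i, Disjoint (X i) F := by
  by_contra! h
  choose f hf using fun i => not_disjoint_iff.1 (h i)
  obtain ⟨i, -, j, -, hij, hfij⟩ := exists_ne_map_eq_of_ncard_lt_of_maps_to
    (s := univ) (by rwa [ncard_univ]) (fun i _ => (hf i).2) hF
  exact (hX hij).ne_of_mem (hf i).1 (hfij ▸ (hf j).1) rfl

lemma FTSpanning.of_subset_of_forall_subset_closure {α : Type*} {M : Matroid α} [M.RankFinite]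
    {k : ℕ} {B B' : Set α} (hB : FTSpanning M k B) (hB'B : B' ⊆ B)
    (hcl : ∀ F ⊆ B', F.ncard ≤ k → B \ F ⊆ M.closure (B' \ F)) : FTSpanning M k B' := by
  refine ⟨hB'B.trans hB.1, fun F hF hFk => Nat.cast_injective (R := ℕ∞) ?_⟩
  have hfull := congrArg ((↑) : ℕ → ℕ∞) (hB.2 F (hF.trans hB'B) hFk)
  simp only [Matroid.cast_mrank_eq_eRk] at hfull ⊢
  refine le_antisymm (M.eRk_mono (sdiff_subset.trans (hB'B.trans hB.1))) ?_
  calc M.eRk M.E = M.eRk (B \ F) := hfull.symm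
    _ ≤ M.eRk (M.closure (B' \ F)) := M.eRk_mono (hcl F hF hFk)
    _ = M.eRk (B' \ F) := M.eRk_closure_eq _

theorem statement1_general {α : Type*} (M : Matroid α) (hE : M.E.Finite)
    (k : ℕ)
    (B : Set α) (hB : FTSpanning M k B)
    (X : Fin (k + 1) → Set α)
    (hdisj : Pairwise (Function.onFun Disjoint X))
    (hmax : ∀ i : Fin (k + 1), MaxIndepIn M (B \ ⋃ j < i, X j) (X i)) :
    FTSpanning M k (⋃ i, X i) := by
  have : M.Finite := ⟨hE⟩
  have hXB : ∀ i, X i ⊆ B := fun i => (hmax i).2.1.trans sdiff_subset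
  refine hB.of_subset_of_forall_subset_closure (iUnion_subset hXB) fun F hF hFk => ?_
  obtain ⟨i, hiF⟩ := exists_disjoint_of_ncard_lt hdisj
    (hE.subset (hF.trans ((iUnion_subset hXB).trans hB.1))) (by simpa [Nat.lt_succ_iff] using hFk)
  exact Matroid.sdiff_subset_closure_sdiff_of_isBasis' (Matroid.maxIndepIn_iff_isBasis'.1 (hmax i))
    hB.1 (iUnion₂_subset fun j _ => subset_iUnion X j) (subset_iUnion X i) hiF

/-- If `B` is a `k`-fault-tolerant spanning set and `X 0, …, X k` are
pairwise disjoint sets with `X 0` an inclusion-maximal independent subset of `B` and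
each `X i` an inclusion-maximal independent subset of `B` minus the previous sets,
then the union of the `X i` is also a `k`-fault-tolerant spanning set. -/
theorem statement1 {α : Type*} (M : Matroid α) (hE : M.E.Finite)
    (r : ℕ) (hr : r = mrank M M.E) (hr1 : 1 ≤ r) (k : ℕ)
    (B : Set α) (hB : FTSpanning M k B)
    (X : Fin (k + 1) → Set α)
    (hdisj : Pairwise (Function.onFun Disjoint X))
    (hmax : ∀ i : Fin (k + 1), MaxIndepIn M (B \ ⋃ j < i, X j) (X i)) :
    FTSpanning M k (⋃ i, X i) :=
  statement1_general M hE k B hB X hdisj hmax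
end

section
/- Let r ≥ 1, k ≥ 0 and n ≥ k+1 be integers. In the real vector space Fin r → ℝ, for i ∈ Fin r let e_i denote the standard basis vector (the function that is 1 at i and 0 elsewhere), and let E = { (j+1) • e_i : i ∈ Fin r, 1 ≤ j+1 ≤ n } be the set of all nonzero integer multiples (j+1)·e_i with 1 ≤ j+1 ≤ n. Then: (a) every finite set B ⊆ E such that for every F ⊆ B with |F| ≤ k the linear span of B \ F over ℝ is all of Fin r → ℝ satisfies |B| ≥ (k+1)·r; and (b) the set B₀ = { (j+1) • e_i : i ∈ Fin r, 0 ≤ j ≤ k } has exactly (k+1)·r elements and satisfies this property, i.e., for every F ⊆ B₀ with |F| ≤ k, the span of B₀ \ F is all of Fin r → ℝ. -/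
open Set

lemma span_top_of_single {r : ℕ} (S : Set (Fin r → ℝ))
    (h : ∀ i : Fin r, ∃ c : ℝ, c ≠ 0 ∧ c • (Pi.single i 1 : Fin r → ℝ) ∈ S) :
    Submodule.span ℝ S = ⊤ := by
  rw [eq_top_iff, ← (Pi.basisFun ℝ (Fin r)).span_eq]
  apply Submodule.span_le.2
  rintro _ ⟨i, rfl⟩
  obtain ⟨c, hc, hmem⟩ := h i
  have hb : Pi.basisFun ℝ (Fin r) i = (Pi.single i 1 : Fin r → ℝ) := by
    ext j; simp [Pi.basisFun_apply]
  rw [hb]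
  have := Submodule.smul_mem (Submodule.span ℝ S) c⁻¹ (Submodule.subset_span hmem)
  rwa [smul_smul, inv_mul_cancel₀ hc, one_smul] at this

/-- In `Fin r → ℝ`, let `E` be the set of vectors `(j+1) • e_i` for
`i ∈ Fin r` and `1 ≤ j+1 ≤ n` (where `e_i` is the `i`-th standard basis vector and
`n ≥ k+1`). Then (a) every finite `B ⊆ E` such that the span of `B \ F` is everything
for all `F ⊆ B` with `|F| ≤ k` satisfies `|B| ≥ (k+1)·r`; and (b) the set
`B₀ = {(j+1) • e_i : i ∈ Fin r, 0 ≤ j ≤ k}` has exactly `(k+1)·r` elements and has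
this spanning property. -/
theorem statement4 (r k n : ℕ) (hr : 1 ≤ r) (hn : k + 1 ≤ n)
    (E : Set (Fin r → ℝ))
    (hE : E = {v | ∃ i : Fin r, ∃ j : Fin n, v = ((j : ℝ) + 1) • Pi.single i (1 : ℝ)})
    (B₀ : Set (Fin r → ℝ))
    (hB₀ : B₀ = {v | ∃ i : Fin r, ∃ j : Fin (k + 1), v = ((j : ℝ) + 1) • Pi.single i (1 : ℝ)}) :
    (∀ B ⊆ E, B.Finite →
      (∀ F ⊆ B, F.ncard ≤ k → Submodule.span ℝ (B \ F) = ⊤) →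
      (k + 1) * r ≤ B.ncard) ∧
    (B₀.ncard = (k + 1) * r ∧
      ∀ F ⊆ B₀, F.ncard ≤ k → Submodule.span ℝ (B₀ \ F) = ⊤) := by
  classical
  constructor
  · -- part (a)
    intro B hBE hBfin hspan
    set s : Finset (Fin r → ℝ) := hBfin.toFinset with hs
    have hsB : (s : Set (Fin r → ℝ)) = B := hBfin.coe_toFinset
    have hfib : ∀ i : Fin r, k + 1 ≤ (s.filter (fun v => v i ≠ 0)).card := by
      intro i
      by_contra hlt
      push_neg at hlt
      set F : Set (Fin r → ℝ) := ↑(s.filter fun v => v i ≠ 0) with hF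
      have hFsub : F ⊆ B := by
        rw [← hsB]
        intro v hv
        simp only [hF, Finset.coe_filter, Set.mem_setOf_eq] at hv
        exact hv.1
      have hFcard : F.ncard ≤ k := by
        have h : F.ncard = (s.filter fun v => v i ≠ 0).card :=
          Set.ncard_coe_finset _
        rw [h]
        exact Nat.lt_succ_iff.mp hlt
      have htop := hspan F hFsub hFcard
      have hle : Submodule.span ℝ (B \ F) ≤
          LinearMap.ker (LinearMap.proj i : (Fin r → ℝ) →ₗ[ℝ] ℝ) := by
        apply Submodule.span_le.2
        rintro v ⟨hvB, hvF⟩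
        simp only [SetLike.mem_coe, LinearMap.mem_ker, LinearMap.proj_apply]
        by_contra hvi
        apply hvF
        simp only [hF, Finset.coe_filter, Set.mem_setOf_eq]
        exact ⟨by rwa [hs, hBfin.mem_toFinset], hvi⟩
      rw [htop, top_le_iff] at hle
      have h1 : (Pi.single i 1 : Fin r → ℝ) ∈
          LinearMap.ker (LinearMap.proj i : (Fin r → ℝ) →ₗ[ℝ] ℝ) := by
        rw [hle]; trivial
      simp [LinearMap.mem_ker] at h1
    have hdisj : ∀ i ∈ (Finset.univ : Finset (Fin r)), ∀ i' ∈ Finset.univ, i ≠ i' →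
        Disjoint (s.filter (fun v => v i ≠ 0)) (s.filter (fun v => v i' ≠ 0)) := by
      intro i _ i' _ hne
      rw [Finset.disjoint_left]
      intro v hv hv'
      simp only [Finset.mem_filter] at hv hv'
      have hvB : v ∈ B := by rw [← hsB]; exact hv.1
      obtain ⟨i₀, j, rfl⟩ := hE ▸ hBE hvB
      have hji : ((j : ℝ) + 1) ≠ 0 := by positivity
      have h1 : i = i₀ := by
        by_contra h
        apply hv.2
        simp [Pi.single_apply, h]
      have h2 : i' = i₀ := by
        by_contra h
        apply hv'.2
        simp [Pi.single_apply, h]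
      exact hne (h1.trans h2.symm)
    have hcard : (Finset.univ.biUnion (fun i : Fin r => s.filter (fun v => v i ≠ 0))).card
        = ∑ i : Fin r, (s.filter (fun v => v i ≠ 0)).card := Finset.card_biUnion hdisj
    have hsub : Finset.univ.biUnion (fun i : Fin r => s.filter (fun v => v i ≠ 0)) ⊆ s := by
      intro v hv
      simp only [Finset.mem_biUnion, Finset.mem_filter] at hv
      obtain ⟨i, _, hv, _⟩ := hv
      exact hv
    have hBcard : B.ncard = s.card := by rw [← hsB, Set.ncard_coe_finset]
    calc (k + 1) * r = ∑ _i : Fin r, (k + 1) := by simp [mul_comm]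
      _ ≤ ∑ i : Fin r, (s.filter (fun v => v i ≠ 0)).card := Finset.sum_le_sum fun i _ => hfib i
      _ = _ := hcard.symm
      _ ≤ s.card := Finset.card_le_card hsub
      _ = B.ncard := hBcard.symm
  · -- part (b)
    set f : Fin r × Fin (k + 1) → (Fin r → ℝ) :=
      fun p => ((p.2 : ℝ) + 1) • (Pi.single p.1 1 : Fin r → ℝ) with hf
    have hrange : B₀ = Set.range f := by
      rw [hB₀]
      ext v
      simp only [Set.mem_setOf_eq, Set.mem_range, hf, Prod.exists]
      constructor
      · rintro ⟨i, j, h⟩; exact ⟨i, j, h.symm⟩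
      · rintro ⟨i, j, h⟩; exact ⟨i, j, h.symm⟩
    have hinj : Function.Injective f := by
      rintro ⟨i, j⟩ ⟨i', j'⟩ h
      have hii : i = i' := by
        by_contra hne
        have h1 := congrFun h i
        simp [hf, Pi.single_apply, Ne.symm hne] at h1
        have : (0:ℝ) < (j : ℝ) + 1 := by positivity
        linarith
      subst hii
      have h1 := congrFun h i
      simp [hf, Pi.single_apply] at h1
      have : (j : ℕ) = (j' : ℕ) := by exact_mod_cast h1
      exact Prod.ext rfl (Fin.ext this)
    have hB₀fin : B₀.Finite := hrange ▸ Set.finite_range f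
    have hncard : B₀.ncard = (k + 1) * r := by
      rw [hrange, ← Set.image_univ, Set.ncard_image_of_injective _ hinj, Set.ncard_univ]
      simp [Nat.card_eq_fintype_card, mul_comm]
    refine ⟨hncard, ?_⟩
    intro F hF hFcard
    apply span_top_of_single
    intro i
    have hnotall : ¬ (Set.range (fun j : Fin (k+1) => f (i, j)) ⊆ F) := by
      intro hsub
      have hginj : Function.Injective (fun j : Fin (k+1) => f (i, j)) := by
        intro j j' h
        have := hinj h
        exact (Prod.ext_iff.1 this).2
      have h1 : (Set.range (fun j : Fin (k+1) => f (i, j))).ncard = k + 1 := by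
        rw [← Set.image_univ, Set.ncard_image_of_injective _ hginj, Set.ncard_univ]
        simp
      have h2 := Set.ncard_le_ncard hsub (hB₀fin.subset hF)
      omega
    rw [Set.not_subset] at hnotall
    obtain ⟨v, ⟨j, rfl⟩, hvF⟩ := hnotall
    refine ⟨(j : ℝ) + 1, by positivity, ?_, hvF⟩
    rw [hB₀]
    exact ⟨i, j, rfl⟩
end

section
/- Let M be a matroid with finite ground set E, let h ≥ 1 be an integer, let X ⊆ E be an h-uniform set, and let Z ⊆ E be any set with |cl(Z) ∩ X| ≥ h. Then cl(X) ⊆ cl(Z). -/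
open Set

/-- Let `M` be a matroid with finite ground set, `h ≥ 1`, `X ⊆ M.E` an
`h`-uniform set, and `Z ⊆ M.E` any set with `|cl(Z) ∩ X| ≥ h`. Then `cl(X) ⊆ cl(Z)`. -/
theorem statement7 {α : Type*} (M : Matroid α) (hE : M.E.Finite)
    (h : ℕ) (hh1 : 1 ≤ h)
    (X : Set α) (hXE : X ⊆ M.E) (hX : HUniform M h X)
    (Z : Set α) (hZE : Z ⊆ M.E)
    (hZ : h ≤ (M.closure Z ∩ X).ncard) :
    M.closure X ⊆ M.closure Z := by
  -- Pick W ⊆ cl(Z) ∩ X of size h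
  obtain ⟨W, hWsub, hWcard⟩ := Set.exists_subset_card_eq hZ
  have hWX : W ⊆ X := hWsub.trans inter_subset_right
  have hWE : W ⊆ M.E := hWX.trans hXE
  have hWfin : W.Finite := hE.subset hWE
  have hXfin : X.Finite := hE.subset hXE
  have hWrank : mrank M W = h := hX.2 W hWX hWcard
  -- the set in the sSup for W is bdd above and attains its sup
  have hbdd : ∀ S : Set α, S ⊆ M.E →
      BddAbove {n : ℕ | ∃ I, M.Indep I ∧ I ⊆ S ∧ I.ncard = n} := by
    intro S hS
    refine ⟨M.E.ncard, ?_⟩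
    rintro n ⟨I, hI, hIS, rfl⟩
    exact Set.ncard_le_ncard (hIS.trans hS) hE
  have hmem : mrank M W ∈ {n : ℕ | ∃ I, M.Indep I ∧ I ⊆ W ∧ I.ncard = n} := by
    exact Nat.sSup_mem ⟨0, ∅, M.empty_indep, empty_subset _, by simp⟩ (hbdd W hWE)
  obtain ⟨I, hI, hIW, hIcard⟩ := hmem
  rw [hWrank] at hIcard
  -- I = W since |I| = |W| = h and I ⊆ W
  have hIWeq : I = W := Set.eq_of_subset_of_ncard_le hIW (by rw [hIcard, hWcard]) hWfin
  have hWindep : M.Indep W := hIWeq ▸ hI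
  -- X ⊆ cl(W)
  have hXclW : X ⊆ M.closure W := by
    intro e he
    by_contra hecl
    have heW : e ∉ W := fun h' => hecl (M.subset_closure W hWE h')
    have hins : M.Indep (insert e W) :=
      (hWindep.insert_indep_iff_of_notMem heW).2 ⟨hXE he, hecl⟩
    have hle : (insert e W).ncard ≤ mrank M X := by
      apply le_csSup (hbdd X hXE)
      exact ⟨insert e W, hins, insert_subset he hWX, rfl⟩
    rw [Set.ncard_insert_of_notMem heW hWfin, hWcard, hX.1] at hle
    omega
  -- W ⊆ cl(Z), so cl(W) ⊆ cl(Z), hence X ⊆ cl(Z), hence cl(X) ⊆ cl(Z)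
  have hWclZ : W ⊆ M.closure Z := hWsub.trans inter_subset_left
  have hXclZ : X ⊆ M.closure Z :=
    hXclW.trans ((M.closure_subset_closure hWclZ).trans (M.closure_closure Z).subset)
  exact (M.closure_subset_closure hXclZ).trans (M.closure_closure Z).subset
end

section
/- Let α and ι be types, let f : α → ι, and let r ≥ 1 and k ≥ 0 be integers. Let X be a finite set of elements of α such that for every F ⊆ X with |F| ≤ k the image of X \ F under f has at least r elements, and suppose X is inclusion-minimal with this property (no proper subset X' ⊊ X satisfies: for every F ⊆ X' with |F| ≤ k, |(X' \ F).image f| ≥ r). Then there exists an integer s ≥ 1 such that |X| = s·(r−1) + k + 1 and, for every i : ι, the fiber {x ∈ X : f x = i} has at most s elements. -/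
/-!
Write `w i` for the size of the fiber of `i` in `X`. Robustness of `X` says exactly that removing
fewer than `r` fibers leaves more than `k` elements, i.e. `∑ i ∈ S, w i < |X| - k` whenever
`|S| < r`. Pick `x ∈ X` in a largest fiber, of size `s`. Minimality at `X.erase x` yields a set
`T` of fewer than `r` values, not containing `f x`, whose fibers cover all of `X` but `k + 1`
elements. Exchanging any value of `T` for `f x` would violate robustness, so every fiber over `T`
has size `s`, and adding `f x` to `T` would too, so `|T| = r - 1`. Hence
`|X| = (r - 1) s + k + 1`.
-/

open Finset

section Exchange

variable {ι : Type*} [DecidableEq ι] {w : ι → ℕ} {r M : ℕ} {i₀ : ι} {T : Finset ι}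

lemma le_of_mem_of_forall_sum_lt (hbound : ∀ S : Finset ι, #S < r → ∑ i ∈ S, w i < M)
    (hT : #T < r) (hi₀T : i₀ ∉ T) (hTM : M ≤ ∑ i ∈ T, w i + 1) {i : ι} (hi : i ∈ T) :
    w i₀ ≤ w i := by
  by_contra! hlt
  have hswap := hbound (insert i₀ (T.erase i))
    ((card_insert_le _ _).trans_lt (by have := card_erase_lt_of_mem hi; omega))
  rw [sum_insert (fun h => hi₀T (mem_of_mem_erase h))] at hswap
  have := add_sum_erase T w hi
  omega

lemma card_eq_of_forall_sum_lt (hbound : ∀ S : Finset ι, #S < r → ∑ i ∈ S, w i < M)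
    (hT : #T < r) (hi₀T : i₀ ∉ T) (hTM : M ≤ ∑ i ∈ T, w i + 1) (hi₀ : 0 < w i₀) :
    #T = r - 1 := by
  by_contra hne
  have hgrow := hbound (insert i₀ T) (by rw [card_insert_of_notMem hi₀T]; omega)
  rw [sum_insert hi₀T] at hgrow
  omega

lemma sum_eq_of_forall_sum_lt (hbound : ∀ S : Finset ι, #S < r → ∑ i ∈ S, w i < M)
    (hT : #T < r) (hi₀T : i₀ ∉ T) (hTM : M ≤ ∑ i ∈ T, w i + 1) (hi₀ : 0 < w i₀)
    (hmax : ∀ i, w i ≤ w i₀) :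
    ∑ i ∈ T, w i = (r - 1) * w i₀ := by
  rw [sum_const_nat fun i hi =>
      le_antisymm (hmax i) (le_of_mem_of_forall_sum_lt hbound hT hi₀T hTM hi),
    card_eq_of_forall_sum_lt hbound hT hi₀T hTM hi₀]

end Exchange

section PartitionMatroid

variable {α ι : Type*} [DecidableEq ι] {f : α → ι}

lemma card_filter_notMem_add_sum_card_fiber (X : Finset α) (S : Finset ι) :
    #{x ∈ X | f x ∉ S} + ∑ i ∈ S, #{x ∈ X | f x = i} = #X := by
  rw [sum_card_fiberwise_eq_card_filter, add_comm]
  exact card_filter_add_card_filter_not _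

lemma card_fiber_le_of_forall_card_fiber_le {X : Finset α} {x : α}
    (hmax : ∀ y ∈ X, #{z ∈ X | f z = f y} ≤ #{z ∈ X | f z = f x}) (i : ι) :
    #{z ∈ X | f z = i} ≤ #{z ∈ X | f z = f x} := by
  obtain ⟨y, hy⟩ | hempty := ({z ∈ X | f z = i}).eq_empty_or_nonempty.symm
  · obtain ⟨hyX, rfl⟩ := mem_filter.mp hy
    exact hmax y hyX
  · simp [hempty]

variable [DecidableEq α] (f) (r k : ℕ)

/-- In the partition matroid whose parts are the fibers of `f`, the rank of `X \ F` stays at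
least `r` after deleting any `k` elements `F`. -/
def IsRobust (X : Finset α) : Prop :=
  ∀ F ⊆ X, #F ≤ k → r ≤ #((X \ F).image f)

variable {f r k}

lemma IsRobust.sum_card_fiber_add_lt {X : Finset α} (hX : IsRobust f r k X) {S : Finset ι}
    (hS : #S < r) : ∑ i ∈ S, #{x ∈ X | f x = i} + k < #X := by
  by_contra! h
  have hrest := card_filter_notMem_add_sum_card_fiber (f := f) X S
  have hrank := hX {x ∈ X | f x ∉ S} (filter_subset _ _) (by omega)
  have himage : (X \ {x ∈ X | f x ∉ S}).image f ⊆ S := by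
    intro i hi
    simp only [mem_image, mem_sdiff, mem_filter, not_and, not_not] at hi
    obtain ⟨y, ⟨hy, hyS⟩, rfl⟩ := hi
    exact hyS hy
  have := card_le_card himage
  omega

lemma exists_card_lt_of_not_isRobust_erase {X : Finset α} {x : α}
    (hX : ¬IsRobust f r k (X.erase x)) :
    ∃ T : Finset ι, #T < r ∧ #({y ∈ X | f y ∉ T}.erase x) ≤ k := by
  simp only [IsRobust, not_forall, not_le] at hX
  obtain ⟨F, -, hFk, hT⟩ := hX
  refine ⟨_, hT, (card_le_card ?_).trans hFk⟩
  intro y hy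
  simp only [mem_erase, mem_filter] at hy
  by_contra hyF
  exact hy.2.2 (mem_image_of_mem f (mem_sdiff.mpr ⟨mem_erase.mpr ⟨hy.1, hy.2.1⟩, hyF⟩))

end PartitionMatroid

/-- Lemma 7(ii) for partition matroids with unit capacities: Let `X` be
a finite set such that for every `F ⊆ X` with `|F| ≤ k` the image of `X \ F` under `f`
has at least `r ≥ 1` elements, and suppose `X` is inclusion-minimal with this property.
Then there is `s ≥ 1` with `|X| = s·(r−1) + k + 1` and every fiber of `f` in `X` has at
most `s` elements. -/
theorem statement11 {α ι : Type*} [DecidableEq α] [DecidableEq ι]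
    (f : α → ι) (r k : ℕ) (hr : 1 ≤ r)
    (X : Finset α)
    (hX : ∀ F ⊆ X, F.card ≤ k → r ≤ ((X \ F).image f).card)
    (hmin : ∀ X' : Finset α, X' ⊂ X →
      ¬ (∀ F ⊆ X', F.card ≤ k → r ≤ ((X' \ F).image f).card)) :
    ∃ s : ℕ, 1 ≤ s ∧ X.card = s * (r - 1) + k + 1 ∧
      ∀ i : ι, (X.filter (fun x => f x = i)).card ≤ s := by
  have hbound (S : Finset ι) (hS : #S < r) : ∑ i ∈ S, #{x ∈ X | f x = i} < #X - k := by
    have := IsRobust.sum_card_fiber_add_lt hX hS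
    omega
  have hXne : X.Nonempty := by
    have := hbound ∅ (by rw [card_empty]; omega)
    rw [sum_empty] at this
    exact card_pos.mp (by omega)
  obtain ⟨x, hx, hmax⟩ := exists_max_image X (fun y => #{z ∈ X | f z = f y}) hXne
  have hfiber := card_fiber_le_of_forall_card_fiber_le hmax
  have hx_fiber : 0 < #{z ∈ X | f z = f x} := card_pos.mpr ⟨x, mem_filter.mpr ⟨hx, rfl⟩⟩
  obtain ⟨T, hT, hTk⟩ := exists_card_lt_of_not_isRobust_erase (hmin _ (erase_ssubset hx))
  have hsplit := card_filter_notMem_add_sum_card_fiber (f := f) X T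
  have hTbound := hbound T hT
  have hxT : x ∈ {y ∈ X | f y ∉ T} := by
    by_contra hxT
    rw [erase_eq_of_notMem hxT] at hTk
    omega
  have hrest := card_erase_add_one hxT
  have hTM : #X - k ≤ ∑ i ∈ T, #{z ∈ X | f z = i} + 1 := by omega
  have hsum := sum_eq_of_forall_sum_lt hbound hT (mem_filter.mp hxT).2 hTM hx_fiber hfiber
  refine ⟨_, hx_fiber, ?_, hfiber⟩
  rw [Nat.mul_comm]
  omega
end
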